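/- Let H be a weighted graph with connected components H_1,…,H_m. Let t = ν(H) + 1 and t_i = ν(H_i) + 1 for i = 1,…,m. Then H is t-saturating if and only if H_i is t_i-saturating for every i = 1,…,m. -/

import Mathlib

open MvPolynomial
open scoped Classical

noncomputable section

/-! ### Weighted graphs and matchings -/

/-- Number of times the vertex `v` appears in the multiset of edges `M`. -/
def edgeCount {α : Type*} (M : Multiset (Sym2 α)) (v : α) : ℕ :=
  Multiset.countP (fun e => v ∈ e) M

/-- A matching of the weighted graph `(G, w)`: a family of edges of `G` (with repetitions
allowed) such that every vertex appears in these edges no more times than its weight.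
Vertices of weight `0` are regarded as not belonging to the weighted graph. -/
def IsWMatching {α : Type*} (G : SimpleGraph α) (w : α → ℕ) (M : Multiset (Sym2 α)) : Prop :=
  (∀ e ∈ M, e ∈ G.edgeSet) ∧ ∀ v, edgeCount M v ≤ w v

/-- The matching number of the weighted graph `(G, w)`. -/
def nu {α : Type*} (G : SimpleGraph α) (w : α → ℕ) : ℕ :=
  sSup {m | ∃ M : Multiset (Sym2 α), IsWMatching G w M ∧ Multiset.card M = m}

/-- `deg_w(i) = Σ_{j ∈ N_w(i)} w j`, the sum of the weights of the neighbours of `i`. -/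
def wdeg {α : Type*} [Fintype α] (G : SimpleGraph α) (w : α → ℕ) (i : α) : ℕ :=
  ∑ j : α, if G.Adj i j then w j else 0

/-- The weighted graph obtained from `(G, w)` by deleting the (open) neighbourhood of `i`. -/
def delNbr {α : Type*} (G : SimpleGraph α) (w : α → ℕ) (i : α) : α → ℕ :=
  fun j => if G.Adj i j then 0 else w j

/-- The weighted graph obtained from `(G, w)` by deleting the vertices of `N`. -/
def delSet {α : Type*} (w : α → ℕ) (N : Set α) : α → ℕ :=
  fun j => if j ∈ N then 0 else w j

/-- A weighted graph `H = (G, w)` is `t`-saturating if `ν(H) < t` and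
`ν(H − N_H(i)) ≥ t − deg_H(i)` for every vertex `i` of `H`. -/
def TSaturating {α : Type*} [Fintype α] (G : SimpleGraph α) (w : α → ℕ) (t : ℕ) : Prop :=
  nu G w < t ∧ ∀ i, 0 < w i → t ≤ nu G (delNbr G w i) + wdeg G w i

/-- A weighted graph `H = (G, w)` is strongly `t`-saturating if `ν(H) < t` and
`ν(H − j) ≥ t − w j` for every vertex `j` of `H`. -/
def StronglyTSaturating {α : Type*} (G : SimpleGraph α) (w : α → ℕ) (t : ℕ) : Prop :=
  nu G w < t ∧ ∀ j, 0 < w j → t ≤ nu G (delSet w {j}) + w j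

/-! ### Covers, cores, neighbourhoods -/

/-- A (vertex) cover of a graph. -/
def IsVCover {α : Type*} (G : SimpleGraph α) (F : Set α) : Prop :=
  ∀ ⦃i j⦄, G.Adj i j → i ∈ F ∨ j ∈ F

/-- A minimal (vertex) cover of a graph. -/
def IsMinimalVCover {α : Type*} (G : SimpleGraph α) (F : Set α) : Prop :=
  IsVCover G F ∧ ∀ F', IsVCover G F' → F' ⊆ F → F' = F

/-- `core(F)`: the set of vertices of `F` which are not adjacent to any vertex outside `F`. -/
def graphCore {α : Type*} (G : SimpleGraph α) (F : Set α) : Set α :=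
  {i | i ∈ F ∧ ∀ j, G.Adj i j → j ∈ F}

/-- The closed neighbourhood `N[U]` of a set of vertices `U`. -/
def closedNbhd {α : Type*} (G : SimpleGraph α) (U : Set α) : Set α :=
  U ∪ {v | ∃ u ∈ U, G.Adj u v}

/-- `F` is minimal among the covers of `G` containing `S`. -/
def MinimalCoverOver {α : Type*} (G : SimpleGraph α) (S F : Set α) : Prop :=
  IsVCover G F ∧ S ⊆ F ∧ ∀ F', IsVCover G F' → S ⊆ F' → F' ⊆ F → F' = F

/-- `W` is a dominating set: every vertex outside `W` is adjacent to a vertex of `W`. -/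
def IsDominating {α : Type*} (G : SimpleGraph α) (W : Set α) : Prop :=
  ∀ v, v ∉ W → ∃ u ∈ W, G.Adj u v

/-- Every connected component of `H` contains an odd cycle of length at most `L`. -/
def ComponentOddCycleLe {β : Type*} (H : SimpleGraph β) (L : ℕ) : Prop :=
  ∀ c : H.ConnectedComponent, ∃ (v : β) (cyc : H.Walk v v),
    H.connectedComponentMk v = c ∧ cyc.IsCycle ∧ Odd cyc.length ∧ cyc.length ≤ L

/-- Every connected component of `H` contains an odd cycle. -/
def ComponentOddCycle {β : Type*} (H : SimpleGraph β) : Prop :=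
  ∀ c : H.ConnectedComponent, ∃ (v : β) (cyc : H.Walk v v),
    H.connectedComponentMk v = c ∧ cyc.IsCycle ∧ Odd cyc.length

/-! ### Edge ideals -/

/-- The edge ideal of a simple graph. -/
def edgeIdeal (k : Type*) [CommRing k] {σ : Type*} (G : SimpleGraph σ) :
    Ideal (MvPolynomial σ k) :=
  Ideal.span {p | ∃ i j, G.Adj i j ∧ p = X i * X j}

/-- The maximal homogeneous ideal `(x_1, …, x_n)`. -/
def maxIdeal (k : Type*) [CommRing k] (σ : Type*) : Ideal (MvPolynomial σ k) :=
  Ideal.span (Set.range (X : σ → MvPolynomial σ k))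

/-- `P_F`, the ideal generated by the variables `x_i`, `i ∈ F`. -/
def varIdeal (k : Type*) [CommRing k] {σ : Type*} (F : Set σ) : Ideal (MvPolynomial σ k) :=
  Ideal.span ((fun i => (X i : MvPolynomial σ k)) '' F)

/-- The monomial `x^a`. -/
def monom (k : Type*) [CommRing k] {n : ℕ} (a : Fin n → ℕ) : MvPolynomial (Fin n) k :=
  ∏ i : Fin n, (X i : MvPolynomial (Fin n) k) ^ a i

/-- `f` belongs to the saturation `J̃ = ⋃_{m ≥ 1} (J : 𝔪^m)` of `J`. -/
def inSaturation (k : Type*) [CommRing k] {σ : Type*} (J : Ideal (MvPolynomial σ k))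
    (f : MvPolynomial σ k) : Prop :=
  ∃ m : ℕ, f ∈ Submodule.colon J (((maxIdeal k σ) ^ m : Ideal (MvPolynomial σ k)) : Set (MvPolynomial σ k))

/-- `P` is an associated prime of the ideal `J`, i.e. of the module `R ⧸ J`. -/
def assocPrime {R : Type*} [CommRing R] (J P : Ideal R) : Prop :=
  P ∈ associatedPrimes R (R ⧸ J)

/-- `P` is an embedded associated prime of `J`: an associated prime of `R ⧸ J` which is
not a minimal prime of `J`. -/
def embeddedAssocPrime {R : Type*} [CommRing R] (J P : Ideal R) : Prop :=
  assocPrime J P ∧ P ∉ J.minimalPrimes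

/-- The five configurations appearing in the description of `Ass(I³)`: a triangle; a union
of an edge and a triangle meeting at exactly one vertex; a union of two vertex-disjoint
triangles with no edges between them; a union of two triangles meeting at exactly one
vertex; a pentagon. `W` is the vertex set of the subgraph. -/
def Config3 {α : Type*} (G : SimpleGraph α) (W : Set α) : Prop :=
  (∃ u v w : α, u ≠ v ∧ u ≠ w ∧ v ≠ w ∧ G.Adj u v ∧ G.Adj v w ∧ G.Adj u w ∧
    W = {u, v, w}) ∨
  (∃ i j h v : α, [i, j, h, v].Pairwise (· ≠ ·) ∧ G.Adj i j ∧ G.Adj j h ∧ G.Adj i h ∧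
    G.Adj i v ∧ W = {i, j, h, v}) ∨
  (∃ u₁ v₁ w₁ u₂ v₂ w₂ : α, [u₁, v₁, w₁, u₂, v₂, w₂].Pairwise (· ≠ ·) ∧
    G.Adj u₁ v₁ ∧ G.Adj v₁ w₁ ∧ G.Adj u₁ w₁ ∧ G.Adj u₂ v₂ ∧ G.Adj v₂ w₂ ∧ G.Adj u₂ w₂ ∧
    (∀ x ∈ ({u₁, v₁, w₁} : Set α), ∀ y ∈ ({u₂, v₂, w₂} : Set α), ¬ G.Adj x y) ∧
    W = {u₁, v₁, w₁, u₂, v₂, w₂}) ∨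
  (∃ i j h u v : α, [i, j, h, u, v].Pairwise (· ≠ ·) ∧
    G.Adj i j ∧ G.Adj j h ∧ G.Adj i h ∧ G.Adj i u ∧ G.Adj u v ∧ G.Adj i v ∧
    W = {i, j, h, u, v}) ∨
  (∃ p : Fin 5 → α, Function.Injective p ∧ (∀ i : Fin 5, G.Adj (p i) (p (i + 1))) ∧
    W = Set.range p)

end

/-!
Deleting the neighbourhood of a vertex `i`, and computing the weighted degree of `i`, only
involve the connected component of `i`. Since no edge joins two components, the matching
number is additive over any set of vertices closed under adjacency and its complement. Hence,
with `R` the weighted graph on the other components, both `ν(H)` and `ν(H − N_H(i))` exceed the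
corresponding quantities for the component `H_c` of `i` by the same `ν(R)`, so the defining
inequality `ν(H) < ν(H − N_H(i)) + deg_H(i)` holds for `H` exactly when it holds for `H_c`.
-/

namespace IsWMatching

variable {α : Type*} {G : SimpleGraph α} {w w₁ w₂ : α → ℕ} {M M₁ M₂ : Multiset (Sym2 α)}

lemma add (h₁ : IsWMatching G w₁ M₁) (h₂ : IsWMatching G w₂ M₂) :
    IsWMatching G (w₁ + w₂) (M₁ + M₂) := by
  refine ⟨fun e he => (Multiset.mem_add.1 he).elim (h₁.1 e) (h₂.1 e), fun v => ?_⟩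
  rw [edgeCount, Multiset.countP_add]
  exact add_le_add (h₁.2 v) (h₂.2 v)

lemma filter_subset {S : Set α} [DecidablePred fun e : Sym2 α => ∀ x ∈ e, x ∈ S]
    (h : IsWMatching G w M) : IsWMatching G (S.indicator w) (M.filter (∀ x ∈ ·, x ∈ S)) := by
  refine ⟨fun e he => h.1 e (Multiset.mem_of_mem_filter he), fun v => ?_⟩
  by_cases hv : v ∈ S
  · rw [Set.indicator_of_mem hv]
    exact (Multiset.countP_le_of_le _ (Multiset.filter_le _ _)).trans (h.2 v)
  · refine (Multiset.countP_eq_zero.2 fun e he hve => hv ?_).trans_le (Nat.zero_le _)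
    exact (Multiset.mem_filter.1 he).2 v hve

end IsWMatching

section MatchingNumber

variable {α : Type*} [Fintype α] {G : SimpleGraph α}

lemma card_le_sum_edgeCount (M : Multiset (Sym2 α)) :
    Multiset.card M ≤ ∑ v, edgeCount M v := by
  induction M using Multiset.induction with
  | empty => simp
  | cons e M ih =>
    obtain ⟨x, hx⟩ : ∃ x, x ∈ e := ⟨e.out.1, Sym2.out_fst_mem e⟩
    have hsum : ∑ v, edgeCount (e ::ₘ M) v
        = ∑ v, edgeCount M v + ∑ v, if v ∈ e then 1 else 0 := by
      simp only [edgeCount, Multiset.countP_cons, Finset.sum_add_distrib]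
    have hone : 1 ≤ ∑ v, if v ∈ e then 1 else 0 :=
      le_of_eq_of_le (if_pos hx).symm
        (Finset.single_le_sum (f := fun v => if v ∈ e then 1 else 0) (by simp) (Finset.mem_univ x))
    rw [Multiset.card_cons, hsum]
    omega

lemma bddAbove_card_isWMatching (G : SimpleGraph α) (w : α → ℕ) :
    BddAbove {m | ∃ M, IsWMatching G w M ∧ Multiset.card M = m} := by
  refine ⟨∑ v, w v, ?_⟩
  rintro m ⟨M, hM, rfl⟩
  exact (card_le_sum_edgeCount M).trans (Finset.sum_le_sum fun v _ => hM.2 v)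

lemma IsWMatching.card_le_nu {w : α → ℕ} {M : Multiset (Sym2 α)} (h : IsWMatching G w M) :
    Multiset.card M ≤ nu G w :=
  le_csSup (bddAbove_card_isWMatching G w) ⟨M, h, rfl⟩

lemma exists_isWMatching_card_eq_nu (G : SimpleGraph α) (w : α → ℕ) :
    ∃ M, IsWMatching G w M ∧ Multiset.card M = nu G w :=
  Nat.sSup_mem (s := {m | ∃ M, IsWMatching G w M ∧ Multiset.card M = m})
    ⟨0, 0, ⟨by simp, fun v => by simp [edgeCount]⟩, rfl⟩ (bddAbove_card_isWMatching G w)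

lemma nu_add_nu_le_nu_add (w₁ w₂ : α → ℕ) : nu G w₁ + nu G w₂ ≤ nu G (w₁ + w₂) := by
  obtain ⟨M₁, hM₁, hc₁⟩ := exists_isWMatching_card_eq_nu G w₁
  obtain ⟨M₂, hM₂, hc₂⟩ := exists_isWMatching_card_eq_nu G w₂
  simpa [hc₁, hc₂] using (hM₁.add hM₂).card_le_nu

lemma nu_eq_nu_indicator_add_nu_indicator_compl {S : Set α}
    (hS : ∀ ⦃a b⦄, G.Adj a b → a ∈ S → b ∈ S) (w : α → ℕ) :
    nu G w = nu G (S.indicator w) + nu G (Sᶜ.indicator w) := by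
  refine le_antisymm ?_ (by
    simpa only [Set.indicator_self_add_compl] using
      nu_add_nu_le_nu_add (G := G) (S.indicator w) (Sᶜ.indicator w))
  obtain ⟨M, hM, hcard⟩ := exists_isWMatching_card_eq_nu G w
  -- an edge of `M` lies either inside `S` or inside `Sᶜ`
  have hsplit : M.filter (∀ x ∈ ·, x ∈ Sᶜ) = M.filter (¬ ∀ x ∈ ·, x ∈ S) := by
    refine Multiset.filter_congr fun e he => ?_
    induction e with
    | h a b =>
      have hab : G.Adj a b := hM.1 _ he
      have hb := hS hab
      have ha := hS hab.symm
      simp only [Sym2.mem_iff, forall_eq_or_imp, forall_eq, Set.mem_compl_iff]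
      tauto
  calc nu G w = Multiset.card (M.filter (∀ x ∈ ·, x ∈ S))
        + Multiset.card (M.filter (∀ x ∈ ·, x ∈ Sᶜ)) := by
        rw [hsplit, ← Multiset.card_add, Multiset.filter_add_not, hcard]
    _ ≤ nu G (S.indicator w) + nu G (Sᶜ.indicator w) :=
        add_le_add (hM.filter_subset (S := S)).card_le_nu (hM.filter_subset (S := Sᶜ)).card_le_nu

end MatchingNumber

section Saturation

variable {α : Type*} {G : SimpleGraph α} {S : Set α} {w : α → ℕ} {i : α}

lemma indicator_delNbr : S.indicator (delNbr G w i) = delNbr G (S.indicator w) i := by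
  ext j
  by_cases hj : j ∈ S <;> by_cases hij : G.Adj i j <;> simp [delNbr, hj, hij]

lemma indicator_compl_delNbr (hS : ∀ ⦃a b⦄, G.Adj a b → a ∈ S → b ∈ S) (hi : i ∈ S) :
    Sᶜ.indicator (delNbr G w i) = Sᶜ.indicator w := by
  ext j
  by_cases hj : j ∈ S
  · simp [hj]
  · have hij : ¬ G.Adj i j := fun hij => hj (hS hij hi)
    simp [delNbr, hj, hij]

variable [Fintype α]

lemma wdeg_indicator (hS : ∀ ⦃a b⦄, G.Adj a b → a ∈ S → b ∈ S) (hi : i ∈ S) :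
    wdeg G (S.indicator w) i = wdeg G w i := by
  refine Finset.sum_congr rfl fun j _ => ?_
  by_cases hij : G.Adj i j
  · simp [hij, hS hij hi]
  · simp [hij]

lemma nu_lt_nu_delNbr_add_wdeg_indicator_iff (hS : ∀ ⦃a b⦄, G.Adj a b → a ∈ S → b ∈ S)
    (hi : i ∈ S) :
    nu G (S.indicator w) < nu G (delNbr G (S.indicator w) i) + wdeg G (S.indicator w) i ↔
      nu G w < nu G (delNbr G w i) + wdeg G w i := by
  have hw := nu_eq_nu_indicator_add_nu_indicator_compl hS w
  have hdel := nu_eq_nu_indicator_add_nu_indicator_compl hS (delNbr G w i)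
  rw [indicator_delNbr, indicator_compl_delNbr hS hi] at hdel
  rw [hw, hdel, wdeg_indicator hS hi]
  omega

lemma tSaturating_nu_add_one_iff :
    TSaturating G w (nu G w + 1) ↔ ∀ i, 0 < w i → nu G w < nu G (delNbr G w i) + wdeg G w i :=
  and_iff_right (Nat.lt_succ_self _)

end Saturation

theorem stmt7_general {α : Type*} [Fintype α] (G : SimpleGraph α) (w : α → ℕ) :
    TSaturating G w (nu G w + 1) ↔
      ∀ c : G.ConnectedComponent,
        TSaturating G (fun v => if G.connectedComponentMk v = c then w v else 0)
          (nu G (fun v => if G.connectedComponentMk v = c then w v else 0) + 1) := by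
  have hind (c : G.ConnectedComponent) :
      (fun v => if G.connectedComponentMk v = c then w v else 0)
        = (G.connectedComponentMk ⁻¹' {c}).indicator w := by
    ext v
    simp [Set.indicator_apply]
  have hclosed (c : G.ConnectedComponent) ⦃a b : α⦄ (hab : G.Adj a b)
      (ha : a ∈ G.connectedComponentMk ⁻¹' {c}) : b ∈ G.connectedComponentMk ⁻¹' {c} :=
    (SimpleGraph.ConnectedComponent.connectedComponentMk_eq_of_adj hab).symm.trans ha
  simp only [hind, tSaturating_nu_add_one_iff]
  refine ⟨fun h c i hi => ?_, fun h i hi => ?_⟩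
  · have hic : i ∈ G.connectedComponentMk ⁻¹' {c} := Set.mem_of_indicator_ne_zero hi.ne'
    rw [Set.indicator_of_mem hic] at hi
    exact (nu_lt_nu_delNbr_add_wdeg_indicator_iff (hclosed c) hic).2 (h i hi)
  · have hii : i ∈ G.connectedComponentMk ⁻¹' {G.connectedComponentMk i} := rfl
    exact (nu_lt_nu_delNbr_add_wdeg_indicator_iff (hclosed _) hii).1
      (h _ i (by rwa [Set.indicator_of_mem hii]))

theorem stmt7 {α : Type*} [Fintype α] (G : SimpleGraph α) (w : α → ℕ)
    (hw : ∀ i, 0 < w i) :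
    TSaturating G w (nu G w + 1) ↔
      ∀ c : G.ConnectedComponent,
        TSaturating G (fun v => if G.connectedComponentMk v = c then w v else 0)
          (nu G (fun v => if G.connectedComponentMk v = c then w v else 0) + 1) :=
  stmt7_general G w
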